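/- arXiv:1912.09044 — 7 statements merged into one kernel-verified Lean document; each statement's English description precedes it below -/
import Mathlib

section
/- Let p be a prime and let m, n, k, l be non-negative integers with m ≤ k and n ≤ l. Then ρ_p(m, n) ≤ ρ_p(k, l). Moreover, equality ρ_p(m, n) = ρ_p(k, l) holds if and only if at least one of the following holds: (a) l = 0; (b) n = l and m = k and l < k; (c) m = k and k ≤ n. -/
/-- `ρ_p(m,n)`: if `n ≠ 0`, write `m = q·n + r` and set `ρ = q·(p^n − 1) + p^r`; if `n = 0`, set `ρ = 1`. -/
def rho (p m n : ℕ) : ℕ := if n = 0 then 1 else m / n * (p ^ n - 1) + p ^ (m % n)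

lemma rho_succ_m (p m n : ℕ) (hp : 2 ≤ p) (hn : 1 ≤ n) :
    rho p m n < rho p (m + 1) n := by
  have hn0 : n ≠ 0 := by omega
  unfold rho
  simp only [hn0, if_false]
  have hdm : m / n * n + m % n = m := Nat.div_add_mod' m n
  have hr : m % n < n := Nat.mod_lt _ (by omega)
  rcases Nat.lt_or_ge (m % n + 1) n with h | h
  · have hdiv : (m + 1) / n = m / n := by
      rw [show m + 1 = (m % n + 1) + m / n * n by omega,
        Nat.add_mul_div_right _ _ (show 0 < n by omega), Nat.div_eq_of_lt h]
      omega
    have hmod : (m + 1) % n = m % n + 1 := by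
      rw [show m + 1 = (m % n + 1) + m / n * n by omega,
        Nat.add_mul_mod_self_right, Nat.mod_eq_of_lt h]
    rw [hdiv, hmod]
    have : p ^ (m % n) < p ^ (m % n + 1) := Nat.pow_lt_pow_right (by omega) (by omega)
    omega
  · have hkey : m + 1 = (m / n + 1) * n := by
      have e : (m / n + 1) * n = m / n * n + n := by ring
      omega
    have hdiv : (m + 1) / n = m / n + 1 := by
      rw [hkey]; exact Nat.mul_div_cancel _ (by omega)
    have hmod : (m + 1) % n = 0 := by
      rw [hkey]; exact Nat.mul_mod_left _ _
    rw [hdiv, hmod]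
    have h1 : p ^ (m % n) < p ^ n := Nat.pow_lt_pow_right (by omega) hr
    have h2 : (m / n + 1) * (p ^ n - 1) = m / n * (p ^ n - 1) + (p ^ n - 1) := by ring
    have h3 : 1 ≤ p ^ n := Nat.one_le_pow _ _ (by omega)
    simp only [pow_zero]
    omega

lemma rho_strictMono_m (p n : ℕ) (hp : 2 ≤ p) (hn : 1 ≤ n) :
    StrictMono (fun m => rho p m n) :=
  strictMono_nat_of_lt_succ (fun m => rho_succ_m p m n hp hn)

lemma rho_eq_pow (p m n : ℕ) (hp : 1 ≤ p) (hn : 1 ≤ n) (h : m ≤ n) : rho p m n = p ^ m := by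
  unfold rho
  simp only [show n ≠ 0 by omega, if_false]
  rcases eq_or_lt_of_le h with rfl | hlt
  · rw [Nat.div_self (by omega), Nat.mod_self]
    have h3 : 1 ≤ p ^ m := Nat.one_le_pow _ _ (by omega)
    simp only [one_mul, pow_zero]
    omega
  · rw [Nat.div_eq_of_lt hlt, Nat.mod_eq_of_lt hlt]
    simp

lemma rho_ge_one (p m n : ℕ) (hp : 1 ≤ p) : 1 ≤ rho p m n := by
  unfold rho
  split
  · exact le_refl 1
  · have : 1 ≤ p ^ (m % n) := Nat.one_le_pow _ _ (by omega)
    omega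

lemma rho_zero_m (p n : ℕ) : rho p 0 n = 1 := by
  unfold rho
  split
  · rfl
  · simp

lemma key_ineq (p n q r s t P S R : ℤ)
    (hp : 2 ≤ p) (hn : 1 ≤ n) (hq : 1 ≤ q) (hr : r ≤ n) (hr0 : 0 ≤ r)
    (hs : s + 1 ≤ n) (hs0 : 0 ≤ s) (ht : 0 ≤ t)
    (hsum : n * t + s = q + r)
    (hP : 2 ≤ P) (hS1 : 1 ≤ S) (hR1 : 1 ≤ R) (hSP : p * S ≤ P) (hRP : R ≤ P)
    (hSR : s ≤ r → S ≤ R) (hRS : r < s → p * R ≤ S)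
    (hrs1 : r = s + 1 → p * S ≤ R) (hn1 : n = 1 → P = p) :
    (q + t) * (P - 1) + S < q * (p * P - 1) + R := by
  rcases eq_or_lt_of_le ht with ht0 | ht1
  · -- t = 0
    have hs' : s = q + r := by rw [← ht0] at hsum; linarith
    nlinarith [mul_nonneg (mul_nonneg (by linarith : (0:ℤ) ≤ q - 1) (by linarith : (0:ℤ) ≤ p - 1)) (by linarith : (0:ℤ) ≤ P),
      mul_nonneg (by linarith : (0:ℤ) ≤ q) (by linarith : (0:ℤ) ≤ p - 2)]
  · rcases le_or_gt s r with hc | hc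
    · have hSR' : S ≤ R := hSR hc
      have hntn : n * (t - 1) ≤ q := by nlinarith
      have htq1 : t ≤ q + 1 := by nlinarith [mul_nonneg (by linarith : (0:ℤ) ≤ n - 1) (by linarith : (0:ℤ) ≤ t - 1)]
      rcases eq_or_lt_of_le htq1 with ht_eq | ht_lt
      · -- t = q + 1 forces n = 1
        have hne1 : n = 1 := by nlinarith
        have hPp : P = p := hn1 hne1
        have hrs : r = s + 1 := by rw [hne1] at hsum; linarith [ht_eq]
        have hpsR : p * S ≤ R := hrs1 hrs
        have h1 : 1 ≤ q * (p - 1) := by nlinarith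
        nlinarith [mul_nonneg (by linarith : (0:ℤ) ≤ p - 1) (by linarith : (0:ℤ) ≤ q * (p - 1) + S - 1)]
      · have htq : t ≤ q := by linarith
        nlinarith [mul_nonneg (mul_nonneg (by linarith : (0:ℤ) ≤ p - 2) (by linarith : (0:ℤ) ≤ q)) (by linarith : (0:ℤ) ≤ P),
          mul_nonneg (by linarith : (0:ℤ) ≤ q - t) (by linarith : (0:ℤ) ≤ P - 1)]
    · have hRS' : p * R ≤ S := hRS hc
      have hqnt : n * t + 1 ≤ q := by linarith
      have htq : t + 1 ≤ q := by
        nlinarith [mul_nonneg (by linarith : (0:ℤ) ≤ n - 1) (by linarith : (0:ℤ) ≤ t)]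
      nlinarith [mul_nonneg (mul_nonneg (by linarith : (0:ℤ) ≤ p - 2) (by linarith : (0:ℤ) ≤ q)) (by linarith : (0:ℤ) ≤ P),
        mul_nonneg (by linarith : (0:ℤ) ≤ q - t - 1) (by linarith : (0:ℤ) ≤ P),
        mul_nonneg (by linarith : (0:ℤ) ≤ p - 2) (by linarith : (0:ℤ) ≤ S)]

lemma rho_step_n (p m n : ℕ) (hp : 2 ≤ p) (hn : 1 ≤ n) (hm : n + 1 ≤ m) :
    rho p m n < rho p m (n + 1) := by
  have hn0 : n ≠ 0 := by omega
  unfold rho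
  rw [if_neg hn0, if_neg (show n + 1 ≠ 0 by omega)]
  set q := m / (n + 1) with hq_def
  set r := m % (n + 1) with hr_def
  have hdm1 : (n + 1) * q + r = m := Nat.div_add_mod m (n + 1)
  have hrlt : r < n + 1 := Nat.mod_lt _ (by omega)
  have hq1 : 1 ≤ q := by
    rcases Nat.eq_zero_or_pos q with h0 | h
    · rw [h0, Nat.mul_zero] at hdm1; omega
    · exact h
  set t := (q + r) / n with ht_def
  set s := (q + r) % n with hs_def
  have hdm2 : n * t + s = q + r := Nat.div_add_mod (q + r) n
  have hslt : s < n := Nat.mod_lt _ (by omega)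
  have hm_eq : m = n * (q + t) + s := by
    have e1 : (n + 1) * q = n * q + q := by ring
    have e2 : n * (q + t) = n * q + n * t := by ring
    omega
  have hdiv : m / n = q + t := by
    rw [hm_eq, Nat.mul_add_div (by omega), Nat.div_eq_of_lt hslt]
    omega
  have hmod : m % n = s := by
    rw [hm_eq, Nat.mul_add_mod, Nat.mod_eq_of_lt hslt]
  rw [hdiv, hmod, pow_succ]
  have hp1 : 1 ≤ p := by omega
  have hpn1 : 1 ≤ p ^ n := Nat.one_le_pow _ _ (by omega)
  have hpn1' : 1 ≤ p ^ n * p := Nat.mul_le_mul hpn1 hp1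
  have key := key_ineq (p : ℤ) (n : ℤ) (q : ℤ) (r : ℤ) (s : ℤ) (t : ℤ)
      ((p : ℤ) ^ n) ((p : ℤ) ^ s) ((p : ℤ) ^ r)
      (by exact_mod_cast hp) (by exact_mod_cast hn) (by exact_mod_cast hq1)
      (by exact_mod_cast Nat.lt_succ_iff.mp hrlt) (by positivity)
      (by exact_mod_cast hslt) (by positivity) (by positivity)
      (by exact_mod_cast hdm2)
      (by exact_mod_cast Nat.one_lt_pow hn0 (by omega : 1 < p))
      (by exact_mod_cast Nat.one_le_pow _ _ (by omega : 0 < p))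
      (by exact_mod_cast Nat.one_le_pow _ _ (by omega : 0 < p))
      (by
        have h : (p : ℤ) ^ (s + 1) ≤ (p : ℤ) ^ n := by
          exact_mod_cast Nat.pow_le_pow_right hp1 hslt
        calc (p : ℤ) * p ^ s = p ^ (s + 1) := by ring
          _ ≤ p ^ n := h)
      (by exact_mod_cast Nat.pow_le_pow_right hp1 (by omega : r ≤ n))
      (fun h => by
        have h' : s ≤ r := by exact_mod_cast h
        exact_mod_cast Nat.pow_le_pow_right hp1 h')
      (fun h => by
        have h' : r < s := by exact_mod_cast h
        have h2 : (p : ℤ) ^ (r + 1) ≤ (p : ℤ) ^ s := by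
          exact_mod_cast Nat.pow_le_pow_right hp1 h'
        calc (p : ℤ) * p ^ r = p ^ (r + 1) := by ring
          _ ≤ p ^ s := h2)
      (fun h => by
        have h' : r = s + 1 := by exact_mod_cast h
        calc (p : ℤ) * p ^ s = p ^ (s + 1) := by ring
          _ ≤ p ^ r := le_of_eq (by rw [h']))
      (fun h => by
        have h' : n = 1 := by exact_mod_cast h
        rw [h', pow_one])
  zify [hpn1, hpn1']
  linarith [key]

lemma rho_le_succ_n (p m l : ℕ) (hp : 2 ≤ p) (hl : 1 ≤ l) :
    rho p m l ≤ rho p m (l + 1) := by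
  rcases Nat.lt_or_ge l m with h | h
  · exact (rho_step_n p m l hp hl (by omega)).le
  · rw [rho_eq_pow p m l (by omega) hl h, rho_eq_pow p m (l + 1) (by omega) (by omega) (by omega)]

lemma rho_lt_n (p m n l : ℕ) (hp : 2 ≤ p) (hn : 1 ≤ n) (hnl : n < l) (hnm : n < m) :
    rho p m n < rho p m l := by
  induction l with
  | zero => omega
  | succ l ih =>
    rcases Nat.lt_or_ge n l with h | h
    · exact lt_of_lt_of_le (ih h) (rho_le_succ_n p m l hp (by omega))
    · have : n = l := by omega
      subst this
      exact rho_step_n p m n hp hn (by omega)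

lemma rho_le_n (p m n l : ℕ) (hp : 2 ≤ p) (hn : 1 ≤ n) (hnl : n ≤ l) :
    rho p m n ≤ rho p m l := by
  rcases eq_or_lt_of_le hnl with rfl | hlt
  · exact le_refl _
  · rcases Nat.lt_or_ge n m with h | h
    · exact (rho_lt_n p m n l hp hn hlt h).le
    · rw [rho_eq_pow p m n (by omega) hn h, rho_eq_pow p m l (by omega) (by omega) (by omega)]

theorem rho_mono_with_equality_characterization
    (p : ℕ) (hp : p.Prime) (m n k l : ℕ) (hmk : m ≤ k) (hnl : n ≤ l) :
    rho p m n ≤ rho p k l ∧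
      (rho p m n = rho p k l ↔
        l = 0 ∨ (n = l ∧ m = k ∧ l < k) ∨ (m = k ∧ k ≤ n)) := by
  have hp2 : 2 ≤ p := hp.two_le
  rcases Nat.eq_zero_or_pos l with hl0 | hl1
  · subst hl0
    have hn0 : n = 0 := by omega
    subst hn0
    simp [rho]
  · rcases Nat.eq_zero_or_pos n with hn0 | hn1
    · subst hn0
      have hmn : rho p m 0 = 1 := by simp [rho]
      have hk1 : 1 ≤ rho p k l := rho_ge_one p k l (by omega)
      constructor
      · omega
      · constructor
        · intro h
          have hk0 : k = 0 := by
            by_contra hne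
            have hlt : rho p 0 l < rho p k l :=
              rho_strictMono_m p l hp2 hl1 (by omega : 0 < k)
            rw [rho_zero_m] at hlt
            omega
          exact Or.inr (Or.inr ⟨by omega, by omega⟩)
        · rintro (h | ⟨h1, h2, h3⟩ | ⟨h1, h2⟩)
          · omega
          · omega
          · have hk0 : k = 0 := by omega
            subst hk0
            rw [hmn, rho_zero_m]
    · have step1 : rho p m n ≤ rho p m l := rho_le_n p m n l hp2 hn1 hnl
      have step2 : rho p m l ≤ rho p k l := by
        rcases eq_or_lt_of_le hmk with rfl | h
        · exact le_refl _
        · exact (rho_strictMono_m p l hp2 hl1 h).le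
      refine ⟨le_trans step1 step2, ?_, ?_⟩
      · intro h
        have hml : rho p m l = rho p k l := le_antisymm step2 (by omega)
        have hmk' : m = k := by
          by_contra hne
          have : rho p m l < rho p k l := rho_strictMono_m p l hp2 hl1 (by omega : m < k)
          omega
        subst hmk'
        have h2 : rho p m n = rho p m l := by omega
        by_cases hnl' : n = l
        · subst hnl'
          rcases Nat.lt_or_ge n m with hc | hc
          · exact Or.inr (Or.inl ⟨rfl, rfl, hc⟩)
          · exact Or.inr (Or.inr ⟨rfl, hc⟩)
        · have hlt : n < l := by omega
          have hmn' : m ≤ n := by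
            by_contra hgt
            have := rho_lt_n p m n l hp2 hn1 hlt (by omega)
            omega
          exact Or.inr (Or.inr ⟨rfl, hmn'⟩)
      · rintro (h | ⟨h1, h2, h3⟩ | ⟨h1, h2⟩)
        · omega
        · subst h1; subst h2; rfl
        · subst h1
          rw [rho_eq_pow p m n (by omega) hn1 h2,
            rho_eq_pow p m l (by omega) hl1 (by omega)]
end

section
/- Let p be a prime and let m, n be integers with m > n ≥ 1. Then ρ_p(m, n) < ρ_p(m, n + 1). -/
lemma rho_add (p k n : ℕ) (hn : n ≠ 0) :
    rho p (k + n) n = rho p k n + (p ^ n - 1) := by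
  unfold rho
  rw [if_neg hn, if_neg hn, Nat.add_div_right _ (Nat.pos_of_ne_zero hn),
    Nat.add_mod_right, add_mul, one_mul]
  ring

lemma rho_of_lt (p k n : ℕ) (hk : k < n) : rho p k n = p ^ k := by
  unfold rho
  rw [if_neg (by omega), Nat.div_eq_of_lt hk, Nat.mod_eq_of_lt hk]
  simp

lemma rho_one (p n : ℕ) (hp : 1 ≤ p) (hn : 1 ≤ n) : rho p 1 n = p := by
  rcases eq_or_lt_of_le hn with h | h
  · simp [rho, ← h]
    omega
  · rw [rho_of_lt p 1 n h, pow_one]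

lemma two_pow_le (p k : ℕ) (hp : 2 ≤ p) : 2 * p ^ k ≤ p ^ (k + 1) := by
  rw [pow_succ, mul_comm 2 (p ^ k)]
  exact Nat.mul_le_mul_left _ hp

lemma rho_succ_le (p n : ℕ) (hp : 2 ≤ p) (hn : 1 ≤ n) (m : ℕ) :
    rho p (m + 1) n + p ^ (n - 1) ≤ rho p m n + p ^ n := by
  have hn0 : n ≠ 0 := by omega
  have hr : m % n < n := Nat.mod_lt _ (by omega)
  have hm : n * (m / n) + m % n = m := Nat.div_add_mod m n
  have hB : 1 ≤ p ^ n := Nat.one_le_pow _ _ (by omega)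
  by_cases hc : m % n + 1 = n
  · have hexp : n * (m / n + 1) = n * (m / n) + n := by ring
    have h1 : m + 1 = n * (m / n + 1) := by omega
    have hdiv : (m + 1) / n = m / n + 1 := by
      rw [h1, Nat.mul_div_cancel_left _ (by omega)]
    have hmod : (m + 1) % n = 0 := by
      rw [h1, Nat.mul_mod_right]
    have hrr : m % n = n - 1 := by omega
    unfold rho
    rw [if_neg hn0, if_neg hn0, hdiv, hmod, hrr, add_mul, one_mul, pow_zero]
    omega
  · have h1 : m + 1 = n * (m / n) + (m % n + 1) := by omega
    have hlt : m % n + 1 < n := by omega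
    have hdiv : (m + 1) / n = m / n := by
      rw [h1, Nat.mul_add_div (by omega), Nat.div_eq_of_lt hlt, add_zero]
    have hmod : (m + 1) % n = m % n + 1 := by
      rw [h1, Nat.mul_add_mod, Nat.mod_eq_of_lt hlt]
    have hle : p ^ (m % n + 1) ≤ p ^ (n - 1) :=
      Nat.pow_le_pow_right (by omega) (by omega)
    have h2 : 2 * p ^ (n - 1) ≤ p ^ n := by
      have := two_pow_le p (n - 1) hp
      rwa [show n - 1 + 1 = n by omega] at this
    have hrpos : 1 ≤ p ^ (m % n) := Nat.one_le_pow _ _ (by omega)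
    unfold rho
    rw [if_neg hn0, if_neg hn0, hdiv, hmod]
    omega

lemma rho_aux (p n : ℕ) (hp : 2 ≤ p) (hn : 1 ≤ n) :
    ∀ m, n < m → rho p m n < rho p m (n + 1) := by
  intro m
  induction m using Nat.strong_induction_on with
  | _ m ih =>
  intro hnm
  have hn0 : n ≠ 0 := by omega
  have hn10 : n + 1 ≠ 0 := by omega
  have hA : 1 ≤ p ^ (n - 1) := Nat.one_le_pow _ _ (by omega)
  have hB : 1 ≤ p ^ n := Nat.one_le_pow _ _ (by omega)
  have hC : 1 ≤ p ^ (n + 1) := Nat.one_le_pow _ _ (by omega)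
  have h2A : 2 * p ^ (n - 1) ≤ p ^ n := by
    have := two_pow_le p (n - 1) hp
    rwa [show n - 1 + 1 = n by omega] at this
  have h2B : 2 * p ^ n ≤ p ^ (n + 1) := two_pow_le p n hp
  by_cases hbig : 2 * n + 2 ≤ m
  · have e1 := rho_add p (m - n) n hn0
    rw [show m - n + n = m by omega] at e1
    have e2 := rho_add p (m - (n + 1)) (n + 1) hn10
    rw [show m - (n + 1) + (n + 1) = m by omega] at e2
    have e3 := rho_succ_le p n hp hn (m - (n + 1))
    rw [show m - (n + 1) + 1 = m - n by omega] at e3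
    have ihh := ih (m - (n + 1)) (by omega) (by omega)
    rw [e1, e2]
    omega
  · by_cases hm1 : m ≤ 2 * n - 1
    · have e1 := rho_add p (m - n) n hn0
      rw [show m - n + n = m by omega, rho_of_lt p (m - n) n (by omega)] at e1
      have e2 := rho_add p (m - (n + 1)) (n + 1) hn10
      rw [show m - (n + 1) + (n + 1) = m by omega,
        rho_of_lt p (m - (n + 1)) (n + 1) (by omega)] at e2
      have hle : p ^ (m - n) ≤ p ^ (n - 1) :=
        Nat.pow_le_pow_right (by omega) (by omega)
      have hpos : 1 ≤ p ^ (m - (n + 1)) := Nat.one_le_pow _ _ (by omega)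
      rw [e1, e2]
      omega
    · by_cases hm2 : m = 2 * n
      · have e1a := rho_add p n n hn0
        have e1b := rho_add p 0 n hn0
        rw [zero_add] at e1b
        rw [rho_of_lt p 0 n (by omega), pow_zero] at e1b
        have e1 : rho p m n = 1 + (p ^ n - 1) + (p ^ n - 1) := by
          rw [hm2, show 2 * n = n + n by ring, e1a, e1b]
        have e2 := rho_add p (n - 1) (n + 1) hn10
        rw [show n - 1 + (n + 1) = m by omega,
          rho_of_lt p (n - 1) (n + 1) (by omega)] at e2
        rw [e1, e2]
        omega
      · have hm : m = 2 * n + 1 := by omega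
        have e1a := rho_add p (1 + n) n hn0
        have e1b := rho_add p 1 n hn0
        rw [rho_one p n (by omega) hn] at e1b
        have e1 : rho p m n = p + (p ^ n - 1) + (p ^ n - 1) := by
          rw [hm, show 2 * n + 1 = 1 + n + n by ring, e1a, e1b]
        have e2 := rho_add p n (n + 1) hn10
        rw [show n + (n + 1) = m by omega, rho_of_lt p n (n + 1) (by omega)] at e2
        have hple : p ≤ p ^ n := by
          calc p = p ^ 1 := (pow_one p).symm
          _ ≤ p ^ n := Nat.pow_le_pow_right (by omega) hn
        rw [e1, e2]
        omega

theorem rho_lt_rho_succ_right (p : ℕ) (hp : p.Prime) (m n : ℕ) (hn : 1 ≤ n) (hnm : n < m) :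
    rho p m n < rho p m (n + 1) := by
  exact rho_aux p n hp.two_le hn m hnm
end

section
/- Let p be a prime, r ≥ 1, and let e₁ ≥ e₂ ≥ ⋯ ≥ e_r ≥ 1 be integers. Set d = e₁ + e₂ + ⋯ + e_r and e = e₁. Then p^{e₁} + p^{e₂} + ⋯ + p^{e_r} − r + 1 ≤ ρ_p(d, e). -/
lemma keyK (p u v : ℕ) (hp : 1 ≤ p) : p ^ u + p ^ v ≤ p ^ (u + v) + 1 := by
  have hu : 1 ≤ p ^ u := Nat.one_le_pow _ _ hp
  have hv : 1 ≤ p ^ v := Nat.one_le_pow _ _ hp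
  have hmul : p ^ (u + v) = p ^ u * p ^ v := pow_add p u v
  nlinarith

lemma rho_step (p m a E : ℕ) (hp : 2 ≤ p) (haE : a ≤ E) (hE : 1 ≤ E) :
    rho p m E + p ^ a ≤ rho p (m + a) E + 1 := by
  have hE' : E ≠ 0 := by omega
  unfold rho
  simp only [hE', if_false]
  set q := m / E with hq
  set s := m % E with hs
  have hsE : s < E := Nat.mod_lt _ (by omega)
  have hm : m = E * q + s := by rw [hq, hs]; exact (Nat.div_add_mod m E).symm
  have hpE : 1 ≤ p ^ E := Nat.one_le_pow _ _ (by omega)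
  by_cases hcase : s + a < E
  · have hdiv : (m + a) / E = q := by
      rw [hm, show E * q + s + a = (s + a) + q * E by ring,
        Nat.add_mul_div_right _ _ (by omega : 0 < E), Nat.div_eq_of_lt hcase]
      omega
    have hmod : (m + a) % E = s + a := by
      rw [hm, show E * q + s + a = (s + a) + q * E by ring,
        Nat.add_mul_mod_self_right, Nat.mod_eq_of_lt hcase]
    rw [hdiv, hmod]
    have := keyK p s a (by omega)
    omega
  · set t := s + a - E with ht
    have htE : t < E := by omega
    have hsplit : E * q + s + a = t + (q + 1) * E := by
      have h : (q + 1) * E = q * E + E := by ring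
      have h2 : E * q = q * E := mul_comm E q
      omega
    have hdiv : (m + a) / E = q + 1 := by
      rw [hm, hsplit, Nat.add_mul_div_right _ _ (by omega : 0 < E), Nat.div_eq_of_lt htE]
      omega
    have hmod : (m + a) % E = t := by
      rw [hm, hsplit, Nat.add_mul_mod_self_right, Nat.mod_eq_of_lt htE]
    rw [hdiv, hmod]
    -- need : q*(p^E-1) + p^s + p^a ≤ (q+1)*(p^E-1) + p^t + 1
    have hkey : p ^ s + p ^ a ≤ p ^ E + p ^ t := by
      have hK := keyK p (s - t) (a - t) (by omega)
      have hK' := Nat.mul_le_mul_left (p ^ t) hK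
      rw [Nat.mul_add, Nat.mul_add, ← pow_add, ← pow_add, ← pow_add] at hK'
      rw [show t + (s - t) = s by omega, show t + (a - t) = a by omega,
        show t + (s - t + (a - t)) = E by omega, mul_one] at hK'
      exact hK'
    have : (q + 1) * (p ^ E - 1) = q * (p ^ E - 1) + (p ^ E - 1) := by ring
    omega

lemma main_aux (p : ℕ) (hp : 2 ≤ p) :
    ∀ (r : ℕ) (e : Fin r → ℕ) (E : ℕ), 1 ≤ E → (∀ i, e i ≤ E) →
    (∑ i, p ^ e i) + 1 ≤ rho p (∑ i, e i) E + r := by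
  intro r
  induction r with
  | zero =>
    intro e E hE _
    have hE' : E ≠ 0 := by omega
    simp [rho, hE']
  | succ n ih =>
    intro e E hE h2
    rw [Fin.sum_univ_succ, Fin.sum_univ_succ]
    have IH := ih (fun i => e i.succ) E hE (fun i => h2 i.succ)
    have step := rho_step p (∑ i : Fin n, e i.succ) (e 0) E hp (h2 0) hE
    rw [add_comm (∑ i : Fin n, e i.succ) (e 0)] at step
    omega

theorem sum_pow_sub_add_one_le_rho (p : ℕ) (hp : p.Prime) (r : ℕ) (hr : 0 < r)
    (e : Fin r → ℕ) (he : Antitone e) (h1 : ∀ i, 1 ≤ e i) :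
    (∑ i, p ^ e i) - r + 1 ≤ rho p (∑ i, e i) (e ⟨0, hr⟩) := by
  have hp2 : 2 ≤ p := hp.two_le
  have hE : 1 ≤ e ⟨0, hr⟩ := h1 _
  have h2 : ∀ i, e i ≤ e ⟨0, hr⟩ := fun i => he (by simp [Fin.le_def])
  have H := main_aux p hp2 r e (e ⟨0, hr⟩) hE h2
  have hsum : r ≤ ∑ i, p ^ e i := by
    calc r = ∑ _i : Fin r, 1 := by simp
    _ ≤ ∑ i, p ^ e i := Finset.sum_le_sum fun i _ => Nat.one_le_pow _ _ (by omega)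
  omega
end

section
/- Let p be a prime, r ≥ 1, and let e₁ ≥ e₂ ≥ ⋯ ≥ e_r ≥ 1 be integers. Set d = e₁ + e₂ + ⋯ + e_r and e = e₁. Then p^{e₁} + p^{e₂} + ⋯ + p^{e_r} − r + 1 = ρ_p(d, e) holds if and only if e₁ = e₂ = ⋯ = e_{r−1} (i.e., all of the first r−1 exponents equal e; this condition is vacuous when r = 1). -/
lemma rho_key (p : ℕ) (hp : 2 ≤ p) {E f : ℕ} (d : ℕ) (hf1 : 1 ≤ f) (hfE : f ≤ E) :
    rho p d E + p ^ f ≤ rho p (d + f) E + 1 ∧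
      (rho p d E + p ^ f = rho p (d + f) E + 1 ↔ f = E ∨ E ∣ d) := by
  have hE : E ≠ 0 := by omega
  have hs : d % E < E := Nat.mod_lt _ (by omega)
  have hdvd : (E ∣ d) ↔ d % E = 0 := Nat.dvd_iff_mod_eq_zero
  have hd : d = E * (d / E) + d % E := (Nat.div_add_mod d E).symm
  have key1 : d + f = (d % E + f) + E * (d / E) := by omega
  have hdiv : (d + f) / E = (d % E + f) / E + d / E := by
    rw [key1, Nat.add_mul_div_left _ _ (by omega : 0 < E)]
  have hmod : (d + f) % E = (d % E + f) % E := by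
    rw [key1, Nat.add_mul_mod_self_left]
  rw [rho, rho, if_neg hE, if_neg hE, hdiv, hmod]
  by_cases hc : d % E + f < E
  · -- no carry
    rw [Nat.div_eq_of_lt hc, Nat.mod_eq_of_lt hc, zero_add]
    have hC : p ^ (d % E + f) = p ^ (d % E) * p ^ f := pow_add p _ _
    have hA : 1 ≤ p ^ (d % E) := Nat.one_le_pow _ _ (by omega)
    have hB : 2 ≤ p ^ f := by
      calc 2 ≤ p := hp
      _ = p ^ 1 := (pow_one p).symm
      _ ≤ p ^ f := Nat.pow_le_pow_right (by omega) hf1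
    have hfE' : f ≠ E := by omega
    have h3 : p ^ (d % E) + p ^ f ≤ p ^ (d % E + f) + 1 := by
      rw [hC]; nlinarith
    have h4 : d % E = 0 → p ^ (d % E) + p ^ f = p ^ (d % E + f) + 1 := by
      intro h; rw [h]; simp only [pow_zero, Nat.zero_add]; omega
    have h5 : 0 < d % E → p ^ (d % E) + p ^ f ≤ p ^ (d % E + f) := by
      intro h
      have hA2 : 2 ≤ p ^ (d % E) := by
        calc 2 ≤ p := hp
        _ = p ^ 1 := (pow_one p).symm
        _ ≤ p ^ (d % E) := Nat.pow_le_pow_right (by omega) h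
      have hZ : (1:ℤ) ≤ ((p:ℤ) ^ (d % E) - 1) * ((p:ℤ) ^ f - 1) := by
        have hA2' : (2:ℤ) ≤ (p:ℤ) ^ (d % E) := by exact_mod_cast hA2
        have hB' : (2:ℤ) ≤ (p:ℤ) ^ f := by exact_mod_cast hB
        nlinarith
      rw [hC]
      zify
      nlinarith [hZ]
    constructor
    · omega
    · constructor
      · intro heq
        right
        rw [hdvd]
        by_contra h
        have := h5 (by omega)
        omega
      · intro h
        rcases h with h | h
        · omega
        · rw [hdvd] at h
          have := h4 h
          omega
  · -- carry
    have ha : d % E + f = (d % E + f - E) + E := by omega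
    have ha2 : d % E + f - E < E := by omega
    have hdiv2 : (d % E + f) / E = 1 := by
      rw [ha, Nat.add_div_right _ (by omega : 0 < E), Nat.div_eq_of_lt ha2]
    have hmod2 : (d % E + f) % E = d % E + f - E := by
      conv_lhs => rw [ha]
      rw [Nat.add_mod_right, Nat.mod_eq_of_lt ha2]
    rw [hdiv2, hmod2, add_mul, one_mul]
    have hP : 1 ≤ p ^ E := Nat.one_le_pow _ _ (by omega)
    have hX : 1 ≤ p ^ (E - f) := Nat.one_le_pow _ _ (by omega)
    have hPE : p ^ E = p ^ f * p ^ (E - f) := by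
      rw [← pow_add]; congr 1; omega
    have hPs : p ^ (d % E) = p ^ (d % E + f - E) * p ^ (E - f) := by
      rw [← pow_add]; congr 1; omega
    have haf : d % E + f - E ≤ f := by omega
    have hab : p ^ (d % E + f - E) ≤ p ^ f := Nat.pow_le_pow_right (by omega) haf
    have h3 : p ^ (d % E) + p ^ f ≤ p ^ E + p ^ (d % E + f - E) := by
      rw [hPE, hPs]; nlinarith
    have h4 : f = E → p ^ (d % E) + p ^ f = p ^ E + p ^ (d % E + f - E) := by
      intro h; subst h
      rw [Nat.add_sub_cancel]
      omega
    have h5 : f < E → p ^ (d % E) + p ^ f + 1 ≤ p ^ E + p ^ (d % E + f - E) := by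
      intro h
      have hX2 : 2 ≤ p ^ (E - f) := by
        calc 2 ≤ p := hp
        _ = p ^ 1 := (pow_one p).symm
        _ ≤ p ^ (E - f) := Nat.pow_le_pow_right (by omega) (by omega)
      have hab2 : p ^ (d % E + f - E) + 1 ≤ p ^ f := by
        have hlt : d % E + f - E < f := by omega
        have := Nat.pow_lt_pow_right (show 1 < p by omega) hlt
        omega
      rw [hPE, hPs]
      zify
      nlinarith
    constructor
    · omega
    · constructor
      · intro heq
        left
        by_contra h
        have := h5 (by omega)
        omega
      · intro h
        have hfeq : f = E := by
          rcases h with h | h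
          · exact h
          · rw [hdvd] at h; omega
        have := h4 hfeq
        omega

lemma rho_main (p : ℕ) (hp : 2 ≤ p) (E : ℕ) :
    ∀ r : ℕ, ∀ e : Fin (r + 1) → ℕ, Antitone e → (∀ i, 1 ≤ e i) → (∀ i, e i ≤ E) →
    (∑ i, p ^ e i) + 1 ≤ rho p (∑ i, e i) E + (r + 1) ∧
    ((∑ i, p ^ e i) + 1 = rho p (∑ i, e i) E + (r + 1) ↔
      ∀ i : Fin (r + 1), (i : ℕ) + 1 < r + 1 → e i = E) := by
  intro r
  induction r with
  | zero =>
      intro e _ h1 hle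
      have hE : E ≠ 0 := by have := h1 0; have := hle 0; omega
      have hcond : ∀ i : Fin 1, (i : ℕ) + 1 < 0 + 1 → e i = E := by
        intro i hi; exact absurd hi (by omega)
      simp only [Fin.sum_univ_succ, Fin.sum_univ_zero, Nat.add_zero, add_zero]
      rcases eq_or_lt_of_le (hle 0) with h | h
      · rw [h, rho, if_neg hE, Nat.div_self (by omega), Nat.mod_self, one_mul, pow_zero]
        have hP : 1 ≤ p ^ E := Nat.one_le_pow _ _ (by omega)
        exact ⟨by omega, fun _ => hcond, fun _ => by omega⟩
      · rw [rho, if_neg hE, Nat.div_eq_of_lt h, Nat.mod_eq_of_lt h, zero_mul]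
        exact ⟨by omega, fun _ => hcond, fun _ => by omega⟩
  | succ r IH =>
      intro e he h1 hle
      have he' : Antitone (fun j : Fin (r + 1) => e j.castSucc) :=
        fun i j hij => he (Fin.castSucc_le_castSucc_iff.mpr hij)
      have hsum1 : (∑ i, p ^ e i)
          = (∑ j : Fin (r + 1), p ^ e j.castSucc) + p ^ e (Fin.last (r + 1)) := by
        rw [Fin.sum_univ_castSucc]
      have hsum2 : (∑ i, e i)
          = (∑ j : Fin (r + 1), e j.castSucc) + e (Fin.last (r + 1)) := by
        rw [Fin.sum_univ_castSucc]
      obtain ⟨A, B⟩ := IH (fun j => e j.castSucc) he' (fun i => h1 _) (fun i => hle _)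
      obtain ⟨K1, K2⟩ := rho_key p hp (∑ j : Fin (r + 1), e j.castSucc)
        (h1 (Fin.last (r + 1))) (hle (Fin.last (r + 1)))
      rw [hsum1, hsum2]
      constructor
      · omega
      · constructor
        · intro heq
          have hAeq : (∑ j : Fin (r + 1), p ^ e j.castSucc) + 1
              = rho p (∑ j : Fin (r + 1), e j.castSucc) E + (r + 1) := by omega
          have hKeq : rho p (∑ j : Fin (r + 1), e j.castSucc) E + p ^ e (Fin.last (r + 1)) =
              rho p ((∑ j : Fin (r + 1), e j.castSucc) + e (Fin.last (r + 1))) E + 1 := by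
            omega
          have hC1 := B.mp hAeq
          have hor := K2.mp hKeq
          intro i hi
          have hival : (i : ℕ) < r + 1 := by omega
          by_cases hir : (i : ℕ) < r
          · have hj := hC1 ⟨(i : ℕ), by omega⟩ (by show (i : ℕ) + 1 < r + 1; omega)
            have hcast : ((⟨(i : ℕ), by omega⟩ : Fin (r + 1)).castSucc) = i := by
              ext; simp
            rw [hcast] at hj
            exact hj
          · have hival' : (i : ℕ) = r := by omega
            have hcast : ((Fin.last r).castSucc : Fin (r + 2)) = i := by
              ext; simp [hival']
            rcases hor with hfE | hdvd
            · have hle1 : e (Fin.last (r + 1)) ≤ e i := he (Fin.le_last i)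
              have := hle i
              omega
            · have hsum3 : (∑ j : Fin (r + 1), e j.castSucc)
                  = (∑ j : Fin r, e (j.castSucc).castSucc) + e ((Fin.last r).castSucc) := by
                rw [Fin.sum_univ_castSucc]
              have hall : ∀ j : Fin r, e (j.castSucc).castSucc = E := by
                intro j
                exact hC1 j.castSucc (by simp only [Fin.coe_castSucc]; omega)
              have hsum4 : (∑ j : Fin r, e (j.castSucc).castSucc) = r * E := by
                rw [Finset.sum_congr rfl (fun j _ => hall j), Finset.sum_const,
                  Finset.card_univ, Fintype.card_fin, smul_eq_mul]
              have hdvd2 : E ∣ e ((Fin.last r).castSucc) := by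
                rw [hsum3, hsum4] at hdvd
                exact (Nat.dvd_add_right (dvd_mul_left E r)).mp hdvd
              have hlast : e ((Fin.last r).castSucc) = E :=
                le_antisymm (hle _) (Nat.le_of_dvd (by have := h1 ((Fin.last r).castSucc); omega) hdvd2)
              rw [hcast] at hlast
              exact hlast
        · intro hC2
          have hC1 : ∀ i : Fin (r + 1), (i : ℕ) + 1 < r + 1 → e i.castSucc = E := by
            intro i _
            exact hC2 i.castSucc (by simp only [Fin.coe_castSucc]; omega)
          have hAeq := B.mpr hC1
          have hall : ∀ j : Fin (r + 1), e j.castSucc = E := by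
            intro j
            exact hC2 j.castSucc (by simp only [Fin.coe_castSucc]; omega)
          have hsumE : (∑ j : Fin (r + 1), e j.castSucc) = (r + 1) * E := by
            rw [Finset.sum_congr rfl (fun j _ => hall j), Finset.sum_const,
              Finset.card_univ, Fintype.card_fin, smul_eq_mul]
          have hdvd : E ∣ (∑ j : Fin (r + 1), e j.castSucc) := by
            rw [hsumE]; exact dvd_mul_left E (r + 1)
          have hKeq := K2.mpr (Or.inr hdvd)
          omega

theorem sum_pow_sub_add_one_eq_rho_iff (p : ℕ) (hp : p.Prime) (r : ℕ) (hr : 0 < r)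
    (e : Fin r → ℕ) (he : Antitone e) (h1 : ∀ i, 1 ≤ e i) :
    (∑ i, p ^ e i) - r + 1 = rho p (∑ i, e i) (e ⟨0, hr⟩) ↔
      ∀ i : Fin r, (i : ℕ) + 1 < r → e i = e ⟨0, hr⟩ := by
  obtain ⟨r', rfl⟩ : ∃ r', r = r' + 1 := ⟨r - 1, by omega⟩
  have hp2 : 2 ≤ p := hp.two_le
  have hle : ∀ i, e i ≤ e ⟨0, hr⟩ := fun i => he (Fin.zero_le i)
  obtain ⟨A, B⟩ := rho_main p hp2 (e ⟨0, hr⟩) r' e he h1 hle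
  have hSge : r' + 1 ≤ ∑ i, p ^ e i := by
    have hterm : ∀ i : Fin (r' + 1), 1 ≤ p ^ e i := fun i => Nat.one_le_pow _ _ (by omega)
    calc r' + 1 = ∑ _i : Fin (r' + 1), 1 := by simp
    _ ≤ ∑ i, p ^ e i := Finset.sum_le_sum (fun i _ => hterm i)
  constructor
  · intro h
    apply B.mp
    omega
  · intro h
    have := B.mpr h
    omega
end

section
/- Let p be a prime, F a field of characteristic p, r ≥ 1, and let e₁ ≥ e₂ ≥ ⋯ ≥ e_r ≥ 1 be integers. Let D be the finite abelian p-group (ZMod p^{e₁}) × (ZMod p^{e₂}) × ⋯ × (ZMod p^{e_r}). Then the Loewy length of the group algebra F[D] equals p^{e₁} + p^{e₂} + ⋯ + p^{e_r} − r + 1. -/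
/-- The Loewy length of a ring: the smallest positive `L` such that the `L`-th power of the
Jacobson radical is zero. -/
noncomputable def loewyLength (A : Type*) [Ring A] : ℕ :=
  sInf {L : ℕ | 0 < L ∧ ((⊥ : Ideal A).jacobson) ^ L = ⊥}

/-!
Write `D = ∏ ZMod (qᵢ)` with `qᵢ = p ^ eᵢ`, let `gᵢ` generate the `i`-th factor and put
`xᵢ = gᵢ - 1`. The `xᵢ` span the augmentation ideal `I`, which is maximal. In characteristic `p`,
`xᵢ ^ qᵢ = gᵢ ^ qᵢ - 1 = 0`, and a binomial expansion gives `I ^ (∑ (qᵢ - 1) + 1) = 0`; so `I` is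
the Jacobson radical. Conversely `(X - 1) ^ (q - 1) = 1 + X + ⋯ + X ^ (q - 1)` in characteristic
`p`, so `∏ xᵢ ^ (qᵢ - 1)` is the sum of all elements of `D`, which is nonzero and lies in
`I ^ ∑ (qᵢ - 1)`.
-/

open Finset

theorem loewyLength_eq_of_pow_eq_bot_of_pow_ne_bot {A : Type*} [Ring A] {n : ℕ}
    (h : (⊥ : Ideal A).jacobson ^ (n + 1) = ⊥) (h' : (⊥ : Ideal A).jacobson ^ n ≠ ⊥) :
    loewyLength A = n + 1 := by
  refine le_antisymm (Nat.sInf_le ⟨n.succ_pos, h⟩) (le_csInf ⟨_, n.succ_pos, h⟩ ?_)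
  rintro L ⟨-, hL⟩
  by_contra! hLn
  exact h' (le_bot_iff.mp ((Ideal.pow_le_pow_right (Nat.le_of_lt_succ hLn)).trans hL.le))

namespace Ideal

variable {R : Type*} [CommSemiring R]

-- `Ideal.sup_pow_add_le_pow_sup_pow` loses one in the exponent, too much for a sharp bound.
theorem sup_pow_add_add_one_le (I J : Ideal R) (m n : ℕ) :
    (I ⊔ J) ^ (m + n + 1) ≤ I ^ (m + 1) ⊔ J ^ (n + 1) := by
  rw [← add_eq_sup, ← add_eq_sup, add_pow, sum_eq_sup]
  refine Finset.sup_le fun i hi => ?_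
  by_cases hmi : m + 1 ≤ i
  · exact Ideal.mul_le_left.trans (Ideal.mul_le_left.trans
      ((pow_le_pow_right hmi).trans le_sup_left))
  · refine Ideal.mul_le_left.trans (Ideal.mul_le_right.trans
      ((pow_le_pow_right ?_).trans le_sup_right))
    grind

theorem span_image_pow_eq_bot {ι : Type*} (x : ι → R) (m : ι → ℕ)
    (hx : ∀ i, x i ^ (m i + 1) = 0) (s : Finset ι) :
    span (x '' s) ^ (∑ i ∈ s, m i + 1) = ⊥ := by
  classical
  induction s using Finset.induction_on with
  | empty => simp
  | insert a s ha ih =>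
    rw [← le_bot_iff, coe_insert, Set.image_insert_eq, span_insert, sum_insert ha, add_assoc]
    refine (sup_pow_add_add_one_le _ _ _ _).trans ?_
    rw [span_singleton_pow, hx, ih, span_singleton_eq_bot.mpr rfl, sup_bot_eq]

theorem span_range_pow_eq_bot {ι : Type*} [Fintype ι] (x : ι → R) (m : ι → ℕ)
    (hx : ∀ i, x i ^ (m i + 1) = 0) :
    span (Set.range x) ^ (∑ i, m i + 1) = ⊥ := by
  simpa using span_image_pow_eq_bot x m hx univ

theorem jacobson_bot_eq_of_pow_eq_bot {R : Type*} [CommRing R] {I : Ideal R} (hI : I.IsMaximal)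
    {n : ℕ} (h : I ^ n = ⊥) : (⊥ : Ideal R).jacobson = I :=
  le_antisymm (sInf_le ⟨bot_le, hI⟩) fun x hx =>
    radical_le_jacobson ⟨n, by simpa [h] using pow_mem_pow hx n⟩

end Ideal

open Polynomial in
theorem sub_one_pow_prime_pow_sub_one {R : Type*} [CommRing R] (p : ℕ) [Fact p.Prime]
    [CharP R p] (x : R) (n : ℕ) : (x - 1) ^ (p ^ n - 1) = ∑ i ∈ range (p ^ n), x ^ i := by
  have key : (X - 1 : (ZMod p)[X]) ^ (p ^ n - 1) = ∑ i ∈ range (p ^ n), X ^ i := by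
    refine mul_right_cancel₀ (by simpa using X_sub_C_ne_zero (1 : ZMod p)) ?_
    rw [← pow_succ, Nat.sub_add_cancel (pow_pos (Fact.out : p.Prime).pos n),
      geom_sum_mul, sub_pow_char_pow, one_pow]
  have := congrArg (eval₂RingHom (ZMod.castHom dvd_rfl R) x) key
  simpa only [map_pow, map_sub, map_one, map_sum, coe_eval₂RingHom, eval₂_X] using this

namespace MonoidAlgebra

variable {k G ι : Type*}

section Group

variable [Group G] {g : ι → G}

theorem of_sub_one_mem_span_of_closure_eq_top [CommRing k]
    (hg : Subgroup.closure (Set.range g) = ⊤) (x : G) :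
    of k G x - 1 ∈ Ideal.span (Set.range fun i => of k G (g i) - 1) := by
  set I := Ideal.span (Set.range fun i => of k G (g i) - 1)
  have hx : x ∈ Subgroup.closure (Set.range g) := hg ▸ Subgroup.mem_top x
  induction hx using Subgroup.closure_induction with
  | mem _ hy =>
    obtain ⟨i, rfl⟩ := hy
    exact Ideal.subset_span ⟨i, rfl⟩
  | one =>
    rw [map_one, sub_self]
    exact I.zero_mem
  | mul y z _ _ hy hz =>
    have : of k G (y * z) - 1 = of k G y * (of k G z - 1) + (of k G y - 1) := by
      rw [map_mul]; noncomm_ring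
    rw [this]
    exact I.add_mem (I.mul_mem_left _ hz) hy
  | inv y _ hy =>
    have : of k G y⁻¹ - 1 = -(of k G y⁻¹ * (of k G y - 1)) := by
      rw [mul_sub, ← map_mul, inv_mul_cancel, map_one]; noncomm_ring
    rw [this]
    exact I.neg_mem (I.mul_mem_left _ hy)

theorem ker_lift_one_eq_span [CommRing k] (hg : Subgroup.closure (Set.range g) = ⊤) :
    RingHom.ker (lift k k G 1) = Ideal.span (Set.range fun i => of k G (g i) - 1) := by
  set I := Ideal.span (Set.range fun i => of k G (g i) - 1)
  refine le_antisymm (fun a ha => ?_) (Ideal.span_le.mpr ?_)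
  · have key : ∀ b, b - algebraMap k _ (lift k k G 1 b) ∈ I := by
      intro b
      induction b using MonoidAlgebra.induction_on with
      | of x =>
        rw [lift_of, MonoidHom.one_apply, map_one]
        exact of_sub_one_mem_span_of_closure_eq_top hg x
      | add b c hb hc => simpa only [map_add, add_sub_add_comm] using I.add_mem hb hc
      | smul c b hb =>
        rw [map_smul, smul_eq_mul, map_mul, Algebra.smul_def, ← mul_sub]
        exact I.mul_mem_left _ hb
    simpa [(RingHom.mem_ker).mp ha] using key a
  · rintro _ ⟨i, rfl⟩
    simp [RingHom.mem_ker]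

theorem isMaximal_span_of_sub_one [Field k] (hg : Subgroup.closure (Set.range g) = ⊤) :
    (Ideal.span (Set.range fun i => of k G (g i) - 1)).IsMaximal := by
  rw [← ker_lift_one_eq_span hg]
  exact RingHom.ker_isMaximal_of_surjective _ fun c => ⟨algebraMap k _ c, AlgHom.commutes _ c⟩

end Group

theorem span_of_sub_one_pow_eq_bot [CommRing k] [CommGroup G] [Fintype ι] (p : ℕ) [Fact p.Prime]
    [CharP k p] (g : ι → G) (e : ι → ℕ) (hg : ∀ i, g i ^ p ^ e i = 1) :
    Ideal.span (Set.range fun i => of k G (g i) - 1) ^ (∑ i, (p ^ e i - 1) + 1) = ⊥ := by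
  have := charP_of_injective_algebraMap' k (A := MonoidAlgebra k G) p
  refine Ideal.span_range_pow_eq_bot _ _ fun i => ?_
  rw [Nat.sub_add_cancel (pow_pos (Fact.out : p.Prime).pos _), sub_pow_char_pow, ← map_pow, hg,
    map_one, one_pow, sub_self]

theorem sum_of_ne_zero [CommRing k] [Nontrivial k] [Monoid G] [Fintype G] :
    ∑ x : G, of k G x ≠ 0 := by
  intro h
  simpa using congrArg (fun a => a.coeff 1) h

end MonoidAlgebra

open MonoidAlgebra

section PiZMod

variable {ι : Type*} [DecidableEq ι] (q : ι → ℕ)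

def piZModGen (i : ι) : ∀ j, Multiplicative (ZMod (q j)) :=
  Pi.mulSingle i (.ofAdd 1)

theorem piZModGen_pow (i : ι) (n : ℕ) :
    piZModGen q i ^ n = Pi.mulSingle i (.ofAdd (n : ZMod (q i))) := by
  rw [piZModGen, ← Pi.mulSingle_pow, ← ofAdd_nsmul, nsmul_one]

theorem piZModGen_pow_self (i : ι) : piZModGen q i ^ q i = 1 := by
  rw [piZModGen_pow, ZMod.natCast_self, ofAdd_zero, Pi.mulSingle_one]

theorem closure_range_piZModGen [Finite ι] [∀ i, NeZero (q i)] :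
    Subgroup.closure (Set.range (piZModGen q)) = ⊤ := by
  refine eq_top_iff.mpr fun x _ => Subgroup.pi_mem_of_mulSingle_mem x fun i => ?_
  have : Pi.mulSingle i (x i) = piZModGen q i ^ (x i).toAdd.val := by
    rw [piZModGen_pow, ZMod.natCast_zmod_val, ofAdd_toAdd]
  rw [this]
  exact pow_mem (Subgroup.subset_closure (Set.mem_range_self i)) _

variable (k : Type*) [CommRing k]

theorem sum_range_of_piZModGen_pow (i : ι) [NeZero (q i)] :
    ∑ n ∈ range (q i), of k _ (piZModGen q i) ^ n =
      ∑ a : Multiplicative (ZMod (q i)), of k _ (Pi.mulSingle i a) := by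
  refine sum_nbij' (fun n => .ofAdd (n : ZMod (q i))) (fun a => a.toAdd.val)
    (by simp) (fun a _ => mem_range.mpr (ZMod.val_lt _))
    (fun n hn => ZMod.val_cast_of_lt (mem_range.mp hn))
    (fun a _ => by simp) fun n _ => by rw [← map_pow, piZModGen_pow]

theorem prod_sum_range_of_piZModGen_pow [Fintype ι] [∀ i, NeZero (q i)] :
    ∏ i, ∑ n ∈ range (q i), of k _ (piZModGen q i) ^ n = ∑ x, of k _ x := by
  simp_rw [sum_range_of_piZModGen_pow, Fintype.prod_sum, ← map_prod, univ_prod_mulSingle]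

end PiZMod

section PrimePower

variable {ι : Type*} [Fintype ι] [DecidableEq ι] (p : ℕ) [Fact p.Prime] (e : ι → ℕ)

theorem prod_of_piZModGen_sub_one_pow_ne_zero (k : Type*) [CommRing k] [CharP k p] :
    ∏ i, (of k _ (piZModGen (fun i => p ^ e i) i) - 1) ^ (p ^ e i - 1) ≠ 0 := by
  have := charP_of_injective_algebraMap' k
    (A := MonoidAlgebra k (∀ i, Multiplicative (ZMod (p ^ e i)))) p
  have := CharP.nontrivial_of_char_ne_one (R := k) (Fact.out : p.Prime).ne_one
  simp_rw [sub_one_pow_prime_pow_sub_one p, prod_sum_range_of_piZModGen_pow]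
  exact sum_of_ne_zero

theorem loewyLength_monoidAlgebra_pi_zmod_prime_pow (k : Type*) [Field k] [CharP k p] :
    loewyLength (MonoidAlgebra k (∀ i, Multiplicative (ZMod (p ^ e i)))) =
      ∑ i, (p ^ e i - 1) + 1 := by
  set I := Ideal.span (Set.range fun i => of k _ (piZModGen (fun i => p ^ e i) i) - 1)
  have hnil : I ^ (∑ i, (p ^ e i - 1) + 1) = ⊥ :=
    span_of_sub_one_pow_eq_bot p _ e (piZModGen_pow_self _)
  have hrad : (⊥ : Ideal _).jacobson = I :=
    Ideal.jacobson_bot_eq_of_pow_eq_bot (isMaximal_span_of_sub_one (closure_range_piZModGen _))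
      hnil
  refine loewyLength_eq_of_pow_eq_bot_of_pow_ne_bot (hrad ▸ hnil) fun hbot =>
    prod_of_piZModGen_sub_one_pow_ne_zero p e k ?_
  have hmem : ∏ i, (of k _ (piZModGen (fun i => p ^ e i) i) - 1) ^ (p ^ e i - 1) ∈
      I ^ ∑ i, (p ^ e i - 1) := by
    rw [← prod_pow_eq_pow_sum]
    exact Ideal.prod_mem_prod fun i _ =>
      Ideal.pow_mem_pow (Ideal.subset_span (Set.mem_range_self i)) _
  rwa [← hrad, hbot, Ideal.mem_bot] at hmem

end PrimePower

theorem loewyLength_groupAlgebra_abelian_general (p : ℕ) (hp : p.Prime)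
    (F : Type*) [Field F] [CharP F p] (r : ℕ)
    (e : Fin r → ℕ) :
    loewyLength (MonoidAlgebra F (∀ i : Fin r, Multiplicative (ZMod (p ^ e i)))) =
      (∑ i, p ^ e i) - r + 1 := by
  have := Fact.mk hp
  rw [loewyLength_monoidAlgebra_pi_zmod_prime_pow p e F,
    sum_tsub_distrib _ fun i _ => Nat.one_le_pow _ _ hp.pos]
  simp

theorem loewyLength_groupAlgebra_abelian (p : ℕ) (hp : p.Prime)
    (F : Type*) [Field F] [CharP F p] (r : ℕ) (hr : 0 < r)
    (e : Fin r → ℕ) (he : Antitone e) (h1 : ∀ i, 1 ≤ e i) :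
    loewyLength (MonoidAlgebra F (∀ i : Fin r, Multiplicative (ZMod (p ^ e i)))) =
      (∑ i, p ^ e i) - r + 1 :=
  loewyLength_groupAlgebra_abelian_general p hp F r e
end

section
/- Let p be a prime, F a field of characteristic p, and D a finite abelian p-group of order p^d and exponent p^e (with d ≥ 1). Then the Loewy length of the group algebra F[D] satisfies LL(F[D]) ≤ ρ_p(d, e). -/
/-
Decompose `D` into cyclic factors of orders `p ^ fᵢ` with generators `gᵢ`, so that `∑ fᵢ = d` and
`fᵢ ≤ e`. The Jacobson radical of `F[D]` lies in the augmentation ideal, which is generated by the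
`gᵢ - 1`, and in characteristic `p` we have `(gᵢ - 1) ^ p ^ fᵢ = gᵢ ^ p ^ fᵢ - 1 = 0`. In a
commutative ring, an ideal generated by elements `xᵢ` with `xᵢ ^ (mᵢ + 1) = 0` has vanishing
`(1 + ∑ mᵢ)`-th power, so `LL(F[D]) ≤ 1 + ∑ (p ^ fᵢ - 1)`. Among exponents `fᵢ ≤ e` summing to `d`,
this bound is largest when they are packed into as many parts equal to `e` as possible, which gives
`ρ_p(d, e)`; the packing step is `p ^ a + p ^ b ≤ p ^ (a + b - t) + p ^ t` for `t ≤ a, b`.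
-/

lemma Nat.add_le_mul_add_one {x y : ℕ} (hx : 1 ≤ x) (hy : 1 ≤ y) : x + y ≤ x * y + 1 := by
  nlinarith

lemma Nat.pow_add_pow_le {p : ℕ} (hp : 0 < p) {a b t : ℕ} (ha : t ≤ a) (hb : t ≤ b) :
    p ^ a + p ^ b ≤ p ^ (a + b - t) + p ^ t := by
  obtain ⟨a, rfl⟩ := Nat.exists_eq_add_of_le ha
  obtain ⟨b, rfl⟩ := Nat.exists_eq_add_of_le hb
  have key := Nat.add_le_mul_add_one (Nat.one_le_pow a p hp) (Nat.one_le_pow b p hp)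
  calc p ^ (t + a) + p ^ (t + b) = p ^ t * (p ^ a + p ^ b) := by ring
    _ ≤ p ^ t * (p ^ a * p ^ b + 1) := Nat.mul_le_mul_left _ key
    _ = p ^ (t + a + (t + b) - t) + p ^ t := by
      rw [show t + a + (t + b) - t = t + a + b by omega]; ring

lemma rho_mul_add_of_lt (p q : ℕ) {e r : ℕ} (hr : r < e) :
    rho p (q * e + r) e = q * (p ^ e - 1) + p ^ r := by
  have he : 0 < e := by omega
  have hdiv : (q * e + r) / e = q := by
    rw [add_comm, Nat.add_mul_div_right _ _ he, Nat.div_eq_of_lt hr, zero_add]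
  have hmod : (q * e + r) % e = r := by
    rw [add_comm, Nat.add_mul_mod_self_right, Nat.mod_eq_of_lt hr]
  rw [rho, if_neg he.ne', hdiv, hmod]

lemma rho_add_pow_le {p : ℕ} (hp : 0 < p) {e a : ℕ} (ha : a ≤ e) (s : ℕ) :
    rho p s e + p ^ a ≤ rho p (s + a) e + 1 := by
  rcases Nat.eq_zero_or_pos e with rfl | he
  · simp [rho, Nat.le_zero.mp ha]
  obtain ⟨q, r, hr, rfl⟩ : ∃ q r, r < e ∧ s = q * e + r :=
    ⟨s / e, s % e, Nat.mod_lt s he, (Nat.div_add_mod' s e).symm⟩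
  rw [rho_mul_add_of_lt p q hr]
  rcases lt_or_ge (r + a) e with h | h
  · have key := Nat.pow_add_pow_le hp (Nat.zero_le r) (Nat.zero_le a)
    rw [add_assoc (q * e), rho_mul_add_of_lt p q h]
    simp only [Nat.sub_zero, pow_zero] at key
    omega
  · have key := Nat.pow_add_pow_le hp (t := r + a - e) (a := r) (b := a) (by omega) (by omega)
    rw [show r + a - (r + a - e) = e by omega] at key
    rw [show q * e + r + a = (q + 1) * e + (r + a - e) by rw [add_mul]; omega,
      rho_mul_add_of_lt p _ (by omega), add_mul, one_mul]
    have hpe := Nat.one_le_pow e p hp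
    omega

lemma one_add_sum_pow_sub_one_le_rho {ι : Type*} {p e : ℕ} (hp : 0 < p) (s : Finset ι)
    {f : ι → ℕ} (hf : ∀ i ∈ s, f i ≤ e) :
    1 + ∑ i ∈ s, (p ^ f i - 1) ≤ rho p (∑ i ∈ s, f i) e := by
  classical
  induction s using Finset.induction_on with
  | empty => simp [rho]
  | insert a s ha ih =>
    rw [Finset.sum_insert ha, Finset.sum_insert ha]
    have hs := ih fun i hi => hf i (Finset.mem_insert_of_mem hi)
    have hstep := rho_add_pow_le hp (hf a (Finset.mem_insert_self a s)) (∑ i ∈ s, f i)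
    have hpa := Nat.one_le_pow (f a) p hp
    rw [add_comm (f a)]
    omega

lemma Ideal.sup_pow_add_add_one_le_s9 {R : Type*} [CommSemiring R] (I J : Ideal R) (m n : ℕ) :
    (I ⊔ J) ^ (m + n + 1) ≤ I ^ (m + 1) ⊔ J ^ (n + 1) := by
  rw [← Ideal.add_eq_sup, ← Ideal.add_eq_sup, add_pow, Ideal.sum_eq_sup]
  refine Finset.sup_le fun i hi => ?_
  by_cases hm : m + 1 ≤ i
  · exact Ideal.mul_le_left.trans (Ideal.mul_le_left.trans
      ((Ideal.pow_le_pow_right hm).trans le_sup_left))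
  · refine Ideal.mul_le_left.trans (Ideal.mul_le_right.trans
      ((Ideal.pow_le_pow_right ?_).trans le_sup_right))
    rw [Finset.mem_range] at hi
    omega

lemma Ideal.span_image_pow_eq_bot_s9 {R ι : Type*} [CommRing R] (s : Finset ι) (x : ι → R)
    (m : ι → ℕ) (hx : ∀ i ∈ s, x i ^ (m i + 1) = 0) :
    Ideal.span (x '' s) ^ (1 + ∑ i ∈ s, m i) = ⊥ := by
  classical
  induction s using Finset.induction_on with
  | empty => simp
  | insert a s ha ih =>
    have hxa : Ideal.span {x a} ^ (m a + 1) = ⊥ := by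
      rw [Ideal.span_singleton_pow, hx a (Finset.mem_insert_self a s), Ideal.span_singleton_zero]
    have hs := ih fun i hi => hx i (Finset.mem_insert_of_mem hi)
    rw [add_comm] at hs
    rw [Finset.sum_insert ha, Finset.coe_insert, Set.image_insert_eq, Ideal.span_insert,
      ← le_bot_iff, show 1 + (m a + ∑ i ∈ s, m i) = m a + ∑ i ∈ s, m i + 1 by ring]
    exact (Ideal.sup_pow_add_add_one_le_s9 _ _ _ _).trans_eq (by rw [hxa, hs, bot_sup_eq])

lemma CommGroup.exists_generators_orderOf_eq_prime_pow {p : ℕ} (hp : p.Prime) (D : Type*)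
    [CommGroup D] [Fintype D] {d : ℕ} (hcard : Fintype.card D = p ^ d) :
    ∃ (ι : Type) (_ : Fintype ι) (g : ι → D) (f : ι → ℕ), Subgroup.closure (Set.range g) = ⊤ ∧
      (∀ i, orderOf (g i) = p ^ f i) ∧ ∑ i, f i = d := by
  classical
  obtain ⟨ι, _, n, hn, ⟨φ⟩⟩ := CommGroup.equiv_prod_multiplicative_zmod_of_finite D
  have : ∀ i, NeZero (n i) := fun i => ⟨by have := hn i; omega⟩
  have hprod : ∏ i, n i = p ^ d := by
    simp [← hcard, Fintype.card_congr φ.toEquiv, Fintype.card_pi]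
  choose f _ hf using fun i =>
    (Nat.dvd_prime_pow hp).1 (hprod ▸ Finset.dvd_prod_of_mem n (Finset.mem_univ i))
  let g : ι → D := fun i => φ.symm (Pi.mulSingle i (Multiplicative.ofAdd 1))
  refine ⟨ι, inferInstance, g, f, ?_, fun i => ?_, ?_⟩
  · refine eq_top_iff.mpr fun x _ => φ.symm_apply_apply x ▸ ?_
    refine Subgroup.pi_mem_of_mulSingle_mem (H := (Subgroup.closure (Set.range g)).comap
      φ.symm.toMonoidHom) (φ x) fun i => ?_
    have hc : φ.symm (Pi.mulSingle i (φ x i)) = g i ^ (φ x i).toAdd.val := by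
      rw [← map_pow, ← Pi.mulSingle_pow, ← ofAdd_nsmul, nsmul_one, ZMod.natCast_zmod_val,
        ofAdd_toAdd]
    rw [Subgroup.mem_comap, MulEquiv.coe_toMonoidHom, hc]
    exact pow_mem (Subgroup.subset_closure (Set.mem_range_self i)) _
  · rw [MulEquiv.orderOf_eq, orderOf_piMulSingle, orderOf_ofAdd_eq_addOrderOf,
      ZMod.addOrderOf_one, hf]
  · refine Nat.pow_right_injective hp.two_le ?_
    simp only [← hprod, hf, Finset.prod_pow_eq_pow_sum]

namespace MonoidAlgebra

section CommRing

variable (k G : Type*) [CommRing k]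

noncomputable def augmentation [Monoid G] : MonoidAlgebra k G →ₐ[k] k :=
  lift k k G 1

variable {k G}

@[simp]
lemma augmentation_single [Monoid G] (g : G) (c : k) : augmentation k G (single g c) = c := by
  simp [augmentation]

lemma of_sub_one_mem_span_of_mem_closure [Group G] {s : Set G} {g : G}
    (hg : g ∈ Subgroup.closure s) :
    of k G g - 1 ∈ Ideal.span ((fun x => of k G x - 1) '' s) := by
  induction hg using Subgroup.closure_induction with
  | mem x hx => exact Ideal.subset_span ⟨x, hx, rfl⟩
  | one => rw [map_one, sub_self]; exact zero_mem _
  | mul x y _ _ hx hy =>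
    rw [show of k G (x * y) - 1 = of k G x * (of k G y - 1) + (of k G x - 1) by
      rw [map_mul, mul_sub, mul_one, sub_add_sub_cancel]]
    exact add_mem (Ideal.mul_mem_left _ _ hy) hx
  | inv x _ hx =>
    rw [show of k G x⁻¹ - 1 = -of k G x⁻¹ * (of k G x - 1) by
      rw [neg_mul, mul_sub, ← map_mul, inv_mul_cancel, map_one, mul_one, neg_sub]]
    exact Ideal.mul_mem_left _ _ hx

lemma ker_augmentation_le_span [Group G] {s : Set G} (hs : Subgroup.closure s = ⊤) :
    RingHom.ker (augmentation k G) ≤ Ideal.span ((fun x => of k G x - 1) '' s) := by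
  have hsub : ∀ a, a - algebraMap k _ (augmentation k G a) ∈
      Ideal.span ((fun x => of k G x - 1) '' s) := by
    intro a
    induction a using induction_linear with
    | zero => simp
    | add a b ha hb =>
      rw [map_add, map_add, add_sub_add_comm]
      exact add_mem ha hb
    | single g c =>
      rw [augmentation_single, ← smul_of, Algebra.smul_def, ← mul_sub_one]
      exact Ideal.mul_mem_left _ _ (of_sub_one_mem_span_of_mem_closure (hs ▸ Subgroup.mem_top g))
  intro a ha
  simpa [RingHom.mem_ker.mp ha] using hsub a

lemma of_sub_one_pow_eq_zero (p : ℕ) [Fact p.Prime] [CharP k p] [Monoid G] {g : G} {n : ℕ}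
    (hg : g ^ p ^ n = 1) : (of k G g - 1) ^ p ^ n = 0 := by
  have : CharP (MonoidAlgebra k G) p := charP_of_injective_algebraMap' k p
  rw [sub_pow_char_pow_of_commute (p := p) (h := Commute.one_right _), ← map_pow, hg, map_one,
    one_pow, sub_self]

end CommRing

variable (k : Type*) {G : Type*} [Field k]

lemma jacobson_bot_le_ker_augmentation [Monoid G] :
    (⊥ : Ideal (MonoidAlgebra k G)).jacobson ≤ RingHom.ker (augmentation k G) :=
  sInf_le ⟨bot_le, RingHom.ker_isMaximal_of_surjective _ fun c => ⟨single 1 c, by simp⟩⟩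

lemma jacobson_pow_eq_bot_of_closure_eq_top (p : ℕ) [Fact p.Prime]
    [CharP k p] [CommGroup G] {ι : Type*} [Fintype ι] {g : ι → G} {f : ι → ℕ}
    (hg : Subgroup.closure (Set.range g) = ⊤) (hf : ∀ i, g i ^ p ^ f i = 1) :
    (⊥ : Ideal (MonoidAlgebra k G)).jacobson ^ (1 + ∑ i, (p ^ f i - 1)) = ⊥ := by
  have hnil : ∀ i ∈ Finset.univ, (of k G (g i) - 1) ^ (p ^ f i - 1 + 1) = 0 := fun i _ => by
    rw [Nat.sub_add_cancel (Nat.one_le_pow _ _ (Fact.out : p.Prime).pos),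
      of_sub_one_pow_eq_zero p (hf i)]
  have hspan := Ideal.span_image_pow_eq_bot_s9 Finset.univ _ _ hnil
  rw [Finset.coe_univ, Set.image_univ, Set.range_comp' (fun x => of k G x - 1) g] at hspan
  exact le_bot_iff.mp <| (Ideal.pow_right_mono
    ((jacobson_bot_le_ker_augmentation k).trans (ker_augmentation_le_span hg)) _).trans_eq hspan

end MonoidAlgebra

lemma loewyLength_le {A : Type*} [Ring A] {L : ℕ} (hL : 0 < L)
    (h : (⊥ : Ideal A).jacobson ^ L = ⊥) : loewyLength A ≤ L :=
  Nat.sInf_le ⟨hL, h⟩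

theorem loewyLength_groupAlgebra_le_rho_general (p : ℕ) (hp : p.Prime)
    (F : Type*) [Field F] [CharP F p] (D : Type*) [CommGroup D] [Fintype D]
    (d e : ℕ) (hcard : Fintype.card D = p ^ d)
    (hexp : Monoid.exponent D = p ^ e) :
    loewyLength (MonoidAlgebra F D) ≤ rho p d e := by
  have : Fact p.Prime := ⟨hp⟩
  obtain ⟨ι, _, g, f, hgen, horder, hsum⟩ :=
    CommGroup.exists_generators_orderOf_eq_prime_pow hp D hcard
  have hfe : ∀ i, f i ≤ e := fun i =>
    (Nat.pow_dvd_pow_iff_le_right hp.one_lt).mp (horder i ▸ hexp ▸ Monoid.order_dvd_exponent (g i))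
  have hbound : 1 + ∑ i, (p ^ f i - 1) ≤ rho p d e :=
    hsum ▸ one_add_sum_pow_sub_one_le_rho hp.pos Finset.univ fun i _ => hfe i
  have hnil := MonoidAlgebra.jacobson_pow_eq_bot_of_closure_eq_top F p hgen fun i =>
    horder i ▸ pow_orderOf_eq_one (g i)
  exact loewyLength_le (by omega) (le_bot_iff.mp ((Ideal.pow_le_pow_right hbound).trans_eq hnil))

theorem loewyLength_groupAlgebra_le_rho (p : ℕ) (hp : p.Prime)
    (F : Type*) [Field F] [CharP F p] (D : Type*) [CommGroup D] [Fintype D]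
    (d e : ℕ) (hd : 1 ≤ d) (hcard : Fintype.card D = p ^ d)
    (hexp : Monoid.exponent D = p ^ e) :
    loewyLength (MonoidAlgebra F D) ≤ rho p d e :=
  loewyLength_groupAlgebra_le_rho_general p hp F D d e hcard hexp
end

section
/- Let F be a field and let A and B be finite-dimensional F-algebras. Let μ : A → B be a surjective F-algebra homomorphism and suppose (ker μ)^k = {0} for a positive integer k. Then the Loewy length of the center of A satisfies LL(Z(A)) ≤ k · LL(Z(B)). -/
theorem loewyLength_center_le_of_nilpotent_ker (F : Type*) [Field F]
    (A B : Type*) [Ring A] [Ring B] [Algebra F A] [Algebra F B]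
    [FiniteDimensional F A] [FiniteDimensional F B]
    (μ : A →ₐ[F] B) (hsurj : Function.Surjective μ)
    (k : ℕ) (hk : 0 < k) (hker : (RingHom.ker μ) ^ k = ⊥) :
    loewyLength (Subalgebra.center F A) ≤ k * loewyLength (Subalgebra.center F B) := by
  set RA := Subalgebra.center F A with hRA
  set RB := Subalgebra.center F B with hRB
  -- the restriction of μ to centers
  have hmem : ∀ x : RA, μ (x : A) ∈ Subalgebra.center F B := by
    intro x
    rw [Subalgebra.mem_center_iff]
    intro b
    obtain ⟨a, rfl⟩ := hsurj b
    rw [← map_mul, ← map_mul, Subalgebra.mem_center_iff.mp x.2 a]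
  let ν : RA →+* RB :=
    { toFun := fun x => ⟨μ (x : A), hmem x⟩
      map_one' := by ext; simp
      map_mul' := by intro x y; ext; simp
      map_zero' := by ext; simp
      map_add' := by intro x y; ext; simp }
  haveI : IsArtinianRing RA := IsArtinianRing.of_finite F RA
  haveI : IsArtinianRing RB := IsArtinianRing.of_finite F RB
  set JA := ((⊥ : Ideal RA).jacobson) with hJA
  set JB := ((⊥ : Ideal RB).jacobson) with hJB
  -- the Loewy length of RB belongs to its defining set
  have hLB : loewyLength RB ∈ {L : ℕ | 0 < L ∧ JB ^ L = ⊥} := by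
    apply Nat.sInf_mem
    obtain ⟨m, hm⟩ := IsArtinianRing.isNilpotent_jacobson_bot (R := RB)
    exact ⟨m + 1, Nat.succ_pos m, by rw [pow_succ, hm]; simp⟩
  set L := loewyLength RB with hL
  -- JA maps into JB
  obtain ⟨n, hn⟩ := IsArtinianRing.isNilpotent_jacobson_bot (R := RA)
  have hν : JA ≤ Ideal.comap ν JB := by
    intro x hx
    have hnil : IsNilpotent x := ⟨n, by
      have := Ideal.pow_mem_pow hx n
      rw [hn, Ideal.zero_eq_bot, Ideal.mem_bot] at this
      exact this⟩
    have hnil2 : IsNilpotent (ν x) := hnil.map ν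
    exact Ideal.radical_le_jacobson (mem_nilradical.mpr hnil2)
  -- JA ^ L lands in the kernel of ν
  have hmapJA : Ideal.map ν JA ≤ JB := Ideal.map_le_iff_le_comap.mpr hν
  have h1 : JA ^ L ≤ RingHom.ker ν := by
    intro x hx
    have hx2 : ν x ∈ Ideal.map ν (JA ^ L) := Ideal.mem_map_of_mem ν hx
    rw [Ideal.map_pow] at hx2
    have : ν x ∈ (⊥ : Ideal RB) := by
      rw [← hLB.2]
      exact Ideal.pow_right_mono hmapJA L hx2
    exact RingHom.mem_ker.mpr (Ideal.mem_bot.mp this)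
  -- the kernel of ν, raised to the k-th power, is zero
  let ι : RA →+* A := (Subalgebra.val RA).toRingHom
  have hι : Function.Injective ι := Subtype.val_injective
  have h2 : RingHom.ker ν ≤ Ideal.comap ι (RingHom.ker μ) := by
    intro x hx
    have : μ (x : A) = 0 := congrArg Subtype.val (RingHom.mem_ker.mp hx)
    simpa [Ideal.mem_comap, RingHom.mem_ker, ι] using this
  have h3 : ∀ m : ℕ, (RingHom.ker ν) ^ m ≤ Ideal.comap ι ((RingHom.ker μ) ^ m) := by
    intro m
    induction m with
    | zero => rw [Submodule.pow_zero, Submodule.pow_zero, Ideal.one_eq_top, Ideal.one_eq_top, Ideal.comap_top]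
    | succ m ih =>
      rw [Submodule.pow_succ, Submodule.pow_succ]
      refine Ideal.mul_le.mpr (fun r hr s hs => ?_)
      rw [Ideal.mem_comap, map_mul]
      exact Ideal.mul_mem_mul (Ideal.mem_comap.mp (ih hr)) (Ideal.mem_comap.mp (h2 hs))
  -- conclude
  have hfinal : JA ^ (k * L) = ⊥ := by
    rw [mul_comm, pow_mul]
    refine le_bot_iff.mp ?_
    intro x hx
    have hx2 : x ∈ (RingHom.ker ν) ^ k := Ideal.pow_right_mono h1 k hx
    have := h3 k hx2
    rw [Ideal.mem_comap, hker, Ideal.mem_bot] at this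
    exact Ideal.mem_bot.mpr (hι (by simpa using this))
  exact Nat.sInf_le ⟨Nat.mul_pos hk hLB.1, hfinal⟩
end
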